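/- arXiv:1711.10129 — 3 statements merged into one kernel-verified Lean document; each statement's English description precedes it below -/
import Mathlib

section
/- For every x ∈ X, Ĵ(x) ≤ Ĵ_δ(x) for all δ > 0, and lim_{δ↓0} Ĵ_δ(x) = Ĵ(x). -/
open scoped ENNReal
open Filter
open scoped Classical NNReal

/-- A stochastic shortest path (SSP) problem with state space `X`, control space `U`,
countable disturbance space `W`, a cost-free absorbing termination state `t`,
nonempty control constraint sets `Uc x ⊆ U`, disturbance distributions `P x u`,
system function `f`, and nonnegative (finite-valued) cost per stage `g`. -/
structure SSP (X U W : Type*) [Countable W] where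
  t : X
  Uc : X → Set U
  Uc_nonempty : ∀ x, (Uc x).Nonempty
  P : X → U → PMF W
  f : X → U → W → X
  g : X → U → W → ℝ≥0∞
  g_lt_top : ∀ x u w, g x u w < ⊤
  f_absorb : ∀ u ∈ Uc t, ∀ w, f t u w = t
  g_zero : ∀ u ∈ Uc t, ∀ w, g t u w = 0

namespace SSP

variable {X U W : Type*} [Countable W] (S : SSP X U W)

/-- A policy `π = (μ₀, μ₁, …)` is admissible if `μ_k(x) ∈ U(x)` for all `k, x`. -/
def IsPolicy (π : ℕ → X → U) : Prop := ∀ k x, π k x ∈ S.Uc x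

/-- Distribution of the state `x_k` after `k` steps under policy `π` starting from `x₀`. -/
noncomputable def stateDist (π : ℕ → X → U) (x₀ : X) : ℕ → PMF X
  | 0 => PMF.pure x₀
  | k + 1 => (stateDist π x₀ k).bind fun x => (S.P x (π k x)).map (S.f x (π k x))

/-- Expected value `E^π_{x₀}[J(x_k)]` of a nonnegative function along the trajectory. -/
noncomputable def expect (π : ℕ → X → U) (x₀ : X) (k : ℕ) (J : X → ℝ≥0∞) : ℝ≥0∞ :=
  ∑' x, S.stateDist π x₀ k x * J x

/-- Expected cost `E^π_{x₀}[g(x_k, μ_k(x_k), w_k)]` of the `k`-th stage. -/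
noncomputable def stageCost (π : ℕ → X → U) (x₀ : X) (k : ℕ) : ℝ≥0∞ :=
  S.expect π x₀ k fun x => ∑' w, S.P x (π k x) w * S.g x (π k x) w

/-- The cost `J_π(x₀) = Σ_{k≥0} E^π_{x₀}[g(x_k, μ_k(x_k), w_k)]` of a policy. -/
noncomputable def Jcost (π : ℕ → X → U) (x₀ : X) : ℝ≥0∞ :=
  ∑' k, S.stageCost π x₀ k

/-- `r_k(π, x₀)`: probability that `x_k ≠ t` under `π` starting from `x₀`. -/
noncomputable def r (π : ℕ → X → U) (x₀ : X) (k : ℕ) : ℝ≥0∞ :=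
  S.expect π x₀ k fun x => if x = S.t then 0 else 1

/-- `Σ_{k≥0} r_k(π,x₀)`: expected number of steps to reach the destination. -/
noncomputable def N (π : ℕ → X → U) (x₀ : X) : ℝ≥0∞ := ∑' k, S.r π x₀ k

/-- A policy is proper at `x` if it is admissible, `J_π(x) < ∞` and `Σ_k r_k(π,x) < ∞`. -/
def ProperAt (π : ℕ → X → U) (x : X) : Prop :=
  S.IsPolicy π ∧ S.Jcost π x < ⊤ ∧ S.N π x < ⊤

/-- The optimal cost function `J*`. -/
noncomputable def Jstar (x : X) : ℝ≥0∞ := ⨅ π ∈ {π | S.IsPolicy π}, S.Jcost π x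

/-- The restricted optimal cost function `Ĵ` over policies proper at `x`
(infimum over the empty set is `∞`). -/
noncomputable def Jhat (x : X) : ℝ≥0∞ := ⨅ π ∈ {π | S.ProperAt π x}, S.Jcost π x

/-- The effective domain `X̂ = {x | Ĵ(x) < ∞}` of `Ĵ`. -/
def Xhat : Set X := {x | S.Jhat x < ⊤}

/-- Expected `k`-th stage cost in the `δ`-perturbed problem (stage cost `g + δ` off `t`). -/
noncomputable def stageCostPert (δ : ℝ≥0∞) (π : ℕ → X → U) (x₀ : X) (k : ℕ) : ℝ≥0∞ :=
  S.expect π x₀ k fun x =>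
    ∑' w, S.P x (π k x) w * (S.g x (π k x) w + if x = S.t then 0 else δ)

/-- The cost `J_{π,δ}` of a policy in the `δ`-perturbed problem. -/
noncomputable def Jpert (δ : ℝ≥0∞) (π : ℕ → X → U) (x₀ : X) : ℝ≥0∞ :=
  ∑' k, S.stageCostPert δ π x₀ k

/-- The optimal cost function `Ĵ_δ` of the `δ`-perturbed problem. -/
noncomputable def JhatPert (δ : ℝ≥0∞) (x : X) : ℝ≥0∞ :=
  ⨅ π ∈ {π | S.IsPolicy π}, S.Jpert δ π x

/-- `Q J x u = E_{w∼P(·|x,u)}[g(x,u,w) + J(f(x,u,w))]`. -/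
noncomputable def Q (J : X → ℝ≥0∞) (x : X) (u : U) : ℝ≥0∞ :=
  ∑' w, S.P x u w * (S.g x u w + J (S.f x u w))

/-- The Bellman operator `(TJ)(x) = inf_{u ∈ U(x)} E[g(x,u,w) + J(f(x,u,w))]`. -/
noncomputable def bellman (J : X → ℝ≥0∞) (x : X) : ℝ≥0∞ := ⨅ u ∈ S.Uc x, S.Q J x u

/-- The tail policy `π_k = (μ_k, μ_{k+1}, …)`. -/
def tail (π : ℕ → X → U) (k : ℕ) : ℕ → X → U := fun m => π (k + m)

/-- The set `Ŵ` of functions `J` with `J(t) = 0`, `Ĵ ≤ J`, and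
`E^π_{x₀}[J(x_k)] → 0` for every pair `(π, x₀)` with `π` proper at `x₀`. -/
def What : Set (X → ℝ≥0∞) :=
  {J | J S.t = 0 ∧ S.Jhat ≤ J ∧
    ∀ π x₀, S.ProperAt π x₀ → Tendsto (fun k => S.expect π x₀ k J) atTop (nhds 0)}

/-- The set `B` of functions `J` with `J(t) = 0` that are bounded over `X̂`. -/
def Bset : Set (X → ℝ≥0∞) :=
  {J | J S.t = 0 ∧ (⨆ x ∈ S.Xhat, J x) < ⊤}

/-- A policy is uniformly proper if it is admissible and the expected number of steps
to reach the destination is uniformly bounded over `X̂`. -/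
def UniformlyProper (π : ℕ → X → U) : Prop :=
  S.IsPolicy π ∧ (⨆ x ∈ S.Xhat, S.N π x) < ⊤

/-- The cost per stage `g` is (uniformly) bounded over `X × U × W`. -/
def BoundedCost : Prop := ∃ b : ℝ≥0∞, b < ⊤ ∧ ∀ x u w, S.g x u w ≤ b

end SSP


namespace SSP

variable {X U W : Type*} [Countable W] (S : SSP X U W)

lemma stageCostPert_eq' (δ : ℝ≥0∞) (π : ℕ → X → U) (x : X) (k : ℕ) :
    S.stageCostPert δ π x k = S.stageCost π x k + δ * S.r π x k := by
  unfold stageCostPert stageCost r expect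
  have hin : ∀ y : X,
      (∑' w, S.P y (π k y) w * (S.g y (π k y) w + if y = S.t then 0 else δ))
      = (∑' w, S.P y (π k y) w * S.g y (π k y) w) + (if y = S.t then (0:ℝ≥0∞) else δ) := by
    intro y
    calc (∑' w, S.P y (π k y) w * (S.g y (π k y) w + if y = S.t then 0 else δ))
        = ∑' w, (S.P y (π k y) w * S.g y (π k y) w
            + S.P y (π k y) w * (if y = S.t then 0 else δ)) := by
          simp [mul_add]
      _ = (∑' w, S.P y (π k y) w * S.g y (π k y) w)
            + ∑' w, S.P y (π k y) w * (if y = S.t then 0 else δ) := ENNReal.tsum_add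
      _ = (∑' w, S.P y (π k y) w * S.g y (π k y) w)
            + (∑' w, S.P y (π k y) w) * (if y = S.t then 0 else δ) := by
          rw [ENNReal.tsum_mul_right]
      _ = _ := by rw [(S.P y (π k y)).tsum_coe, one_mul]
  calc (∑' y, S.stateDist π x k y *
          ∑' w, S.P y (π k y) w * (S.g y (π k y) w + if y = S.t then 0 else δ))
      = ∑' y, (S.stateDist π x k y * ∑' w, S.P y (π k y) w * S.g y (π k y) w
          + δ * (S.stateDist π x k y * (if y = S.t then 0 else 1))) := by
        refine tsum_congr fun y => ?_
        rw [hin y, mul_add]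
        by_cases h : y = S.t <;> simp [h, mul_comm]
    _ = (∑' y, S.stateDist π x k y * ∑' w, S.P y (π k y) w * S.g y (π k y) w)
          + ∑' y, δ * (S.stateDist π x k y * (if y = S.t then 0 else 1)) := ENNReal.tsum_add
    _ = _ := by rw [ENNReal.tsum_mul_left]

lemma Jpert_eq' (δ : ℝ≥0∞) (π : ℕ → X → U) (x : X) :
    S.Jpert δ π x = S.Jcost π x + δ * S.N π x := by
  unfold Jpert Jcost N
  simp only [S.stageCostPert_eq' δ π x]
  rw [ENNReal.tsum_add, ENNReal.tsum_mul_left]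

lemma Jhat_le_JhatPert' (δ : ℝ≥0∞) (hδ0 : δ ≠ 0) (hδt : δ ≠ ⊤) (x : X) :
    S.Jhat x ≤ S.JhatPert δ x := by
  refine le_iInf₂ fun π hπ => ?_
  by_cases h : S.Jpert δ π x = ⊤
  · simp [h]
  have heq := S.Jpert_eq' δ π x
  have hJ : S.Jcost π x < ⊤ := by
    rw [heq] at h
    exact lt_of_le_of_lt (le_add_right le_rfl) (lt_top_iff_ne_top.2 h)
  have hN : S.N π x < ⊤ := by
    by_contra hN'
    rw [not_lt, top_le_iff] at hN'
    rw [heq, hN', ENNReal.mul_top hδ0] at h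
    simp at h
  have hp : S.ProperAt π x := ⟨hπ, hJ, hN⟩
  calc S.Jhat x ≤ S.Jcost π x := iInf₂_le π hp
    _ ≤ S.Jpert δ π x := by rw [heq]; exact le_add_right le_rfl

end SSP

/-- For every `x`, `Ĵ(x) ≤ Ĵ_δ(x)` for all `δ > 0`, and
`Ĵ_δ(x) → Ĵ(x)` as `δ ↓ 0`. -/
theorem perturbed_opt_tendsto_Jhat {X U W : Type*} [Countable W] (S : SSP X U W) (x : X) :
    (∀ δ : ℝ≥0, 0 < δ → S.Jhat x ≤ S.JhatPert (δ : ℝ≥0∞) x) ∧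
    Tendsto (fun δ : ℝ≥0 => S.JhatPert (δ : ℝ≥0∞) x)
      (nhdsWithin 0 (Set.Ioi 0)) (nhds (S.Jhat x)) := by
  constructor
  · intro δ hδ
    exact S.Jhat_le_JhatPert' _ (by exact_mod_cast hδ.ne') ENNReal.coe_ne_top x
  · rw [tendsto_order]
    constructor
    · intro a ha
      filter_upwards [self_mem_nhdsWithin] with δ hδ
      exact lt_of_lt_of_le ha
        (S.Jhat_le_JhatPert' _ (by exact_mod_cast (Set.mem_Ioi.1 hδ).ne') ENNReal.coe_ne_top x)
    · intro b hb
      obtain ⟨π, hπ, hlt⟩ : ∃ π, S.ProperAt π x ∧ S.Jcost π x < b := by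
        simpa [SSP.Jhat, iInf_lt_iff] using hb
      have hN : S.N π x ≠ ⊤ := hπ.2.2.ne
      have htend : Tendsto (fun δ : ℝ≥0 => S.Jcost π x + (δ : ℝ≥0∞) * S.N π x)
          (nhdsWithin 0 (Set.Ioi 0)) (nhds (S.Jcost π x)) := by
        have h1 : Tendsto (fun δ : ℝ≥0 => (δ : ℝ≥0∞)) (nhdsWithin 0 (Set.Ioi 0))
            (nhds (0 : ℝ≥0∞)) :=
          (ENNReal.tendsto_coe.2 tendsto_id).mono_left nhdsWithin_le_nhds
        have h2 := ENNReal.Tendsto.mul_const h1 (Or.inr hN)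
        rw [zero_mul] at h2
        simpa using tendsto_const_nhds.add h2
      filter_upwards [htend.eventually_lt_const hlt] with δ hδ
      calc S.JhatPert (δ : ℝ≥0∞) x ≤ S.Jpert (δ : ℝ≥0∞) π x := iInf₂_le π hπ.1
        _ = S.Jcost π x + (δ : ℝ≥0∞) * S.N π x := S.Jpert_eq' _ π x
        _ < b := hδ
end

section
/- Let π = (μ₀,μ₁,…) be a policy proper at a state x₀ (i.e., (π,x₀) ∈ C). Then for every k = 0,1,…, 0 ≤ E^π_{x₀}[Ĵ(x_k)] ≤ E^π_{x₀}[J_{π_k}(x_k)] < ∞, where π_k = (μ_k,μ_{k+1},…) is the tail policy and x_k is the state after k steps under π from x₀. -/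
/-!
By the Markov property, `E^π_{x₀}[J_{π_k}(x_k)] = Σ_{m ≥ k} E^π_{x₀}[g(x_m, μ_m(x_m), w_m)]`, a tail
of the series defining `J_π(x₀) < ∞`; likewise the expected number of remaining steps
`E^π_{x₀}[Σ_m r_m(π_k, x_k)]` is a tail of `Σ_m r_m(π, x₀) < ∞`. Hence both integrands are finite
at every state `x` that `x_k` reaches with positive probability, i.e. `π_k` is proper at `x`,
so `Ĵ(x) ≤ J_{π_k}(x)` there.
-/

open scoped ENNReal
open Filter
open scoped Classical NNReal

namespace SSP

variable {X U W : Type*} [Countable W] (S : SSP X U W)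

lemma stateDist_add (π : ℕ → X → U) (x₀ : X) (k m : ℕ) :
    S.stateDist π x₀ (k + m) = (S.stateDist π x₀ k).bind fun x => S.stateDist (tail π k) x m := by
  induction m with
  | zero => simp [stateDist]
  | succ m ih =>
    show (S.stateDist π x₀ (k + m)).bind _ = _
    rw [ih, PMF.bind_bind]
    rfl

lemma expect_add (π : ℕ → X → U) (x₀ : X) (k m : ℕ) (J : X → ℝ≥0∞) :
    S.expect π x₀ (k + m) J = S.expect π x₀ k fun x => S.expect (tail π k) x m J := by
  simp only [expect, stateDist_add, PMF.bind_apply, ← ENNReal.tsum_mul_right,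
    ← ENNReal.tsum_mul_left, mul_assoc]
  exact ENNReal.tsum_comm

lemma expect_tsum (π : ℕ → X → U) (x₀ : X) (k : ℕ) (J : ℕ → X → ℝ≥0∞) :
    S.expect π x₀ k (fun x => ∑' m, J m x) = ∑' m, S.expect π x₀ k (J m) := by
  simp only [expect, ← ENNReal.tsum_mul_left]
  exact ENNReal.tsum_comm

/-- Both `J_π` and `Σ_m r_m(π, ·)` are of this form, `c m` being the cost of stage `m`. -/
lemma expect_tsum_tail (π : ℕ → X → U) (x₀ : X) (k : ℕ) (c : ℕ → X → ℝ≥0∞) :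
    S.expect π x₀ k (fun x => ∑' m, S.expect (tail π k) x m (c (k + m))) =
      ∑' m, S.expect π x₀ (k + m) (c (k + m)) := by
  simp only [expect_tsum, expect_add]

lemma expect_Jcost_tail_le (π : ℕ → X → U) (x₀ : X) (k : ℕ) :
    S.expect π x₀ k (S.Jcost (tail π k)) ≤ S.Jcost π x₀ :=
  (S.expect_tsum_tail π x₀ k fun m x => ∑' w, S.P x (π m x) w * S.g x (π m x) w).trans_le
    (ENNReal.tsum_comp_le_tsum_of_injective (add_right_injective k) (S.stageCost π x₀))

lemma expect_N_tail_le (π : ℕ → X → U) (x₀ : X) (k : ℕ) :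
    S.expect π x₀ k (S.N (tail π k)) ≤ S.N π x₀ :=
  (S.expect_tsum_tail π x₀ k fun _ x => if x = S.t then 0 else 1).trans_le
    (ENNReal.tsum_comp_le_tsum_of_injective (add_right_injective k) (S.r π x₀))

lemma lt_top_of_expect_lt_top {π : ℕ → X → U} {x₀ : X} {k : ℕ} {J : X → ℝ≥0∞} {x : X}
    (hJ : S.expect π x₀ k J < ⊤) (hx : S.stateDist π x₀ k x ≠ 0) : J x < ⊤ :=
  ENNReal.lt_top_of_mul_ne_top_right ((ENNReal.le_tsum x).trans_lt hJ).ne hx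

lemma expect_mono_of_support {π : ℕ → X → U} {x₀ : X} {k : ℕ} {J J' : X → ℝ≥0∞}
    (h : ∀ x, S.stateDist π x₀ k x ≠ 0 → J x ≤ J' x) :
    S.expect π x₀ k J ≤ S.expect π x₀ k J' := by
  refine ENNReal.tsum_le_tsum fun x => ?_
  rcases eq_or_ne (S.stateDist π x₀ k x) 0 with hx | hx
  · simp [hx]
  · exact mul_le_mul_right (h x hx) _

lemma ProperAt.tail {π : ℕ → X → U} {x₀ : X} (h : S.ProperAt π x₀) {k : ℕ} {x : X}
    (hx : S.stateDist π x₀ k x ≠ 0) : S.ProperAt (tail π k) x :=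
  ⟨fun m y => h.1 (k + m) y,
    S.lt_top_of_expect_lt_top ((S.expect_Jcost_tail_le π x₀ k).trans_lt h.2.1) hx,
    S.lt_top_of_expect_lt_top ((S.expect_N_tail_le π x₀ k).trans_lt h.2.2) hx⟩

lemma Jhat_le_Jcost {π : ℕ → X → U} {x : X} (h : S.ProperAt π x) : S.Jhat x ≤ S.Jcost π x :=
  biInf_le (fun π' => S.Jcost π' x) h

end SSP

/-- If `π` is proper at `x₀`, then for every `k`,
`0 ≤ E^π_{x₀}[Ĵ(x_k)] ≤ E^π_{x₀}[J_{π_k}(x_k)] < ∞`, where `π_k` is the tail policy. -/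
theorem expected_tail_cost_finite {X U W : Type*} [Countable W] (S : SSP X U W)
    (π : ℕ → X → U) (x₀ : X) (h : S.ProperAt π x₀) (k : ℕ) :
    0 ≤ S.expect π x₀ k S.Jhat ∧
    S.expect π x₀ k S.Jhat ≤ S.expect π x₀ k (S.Jcost (SSP.tail π k)) ∧
    S.expect π x₀ k (S.Jcost (SSP.tail π k)) < ⊤ :=
  ⟨zero_le,
    S.expect_mono_of_support fun _ hx => S.Jhat_le_Jcost (h.tail S hx),
    (S.expect_Jcost_tail_le π x₀ k).trans_lt h.2.1⟩
end

section
/- Ĵ is the unique solution of Bellman's equation within the set Ŵ: if J ∈ Ŵ satisfies J(x) = inf_{u ∈ U(x)} E_{w~P(·|x,u)}[ g(x,u,w) + J(f(x,u,w)) ] for all x ∈ X, then J = Ĵ. -/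
open scoped ENNReal
open Filter
open scoped Classical NNReal

/-! Since `J ≤ TJ`, unrolling Bellman's inequality `k` steps along any admissible policy `π` gives
`J(x₀) ≤ Σ_{m<k} E[g_m] + E^π_{x₀}[J(x_k)]`. For `π` proper at `x₀` the last term tends to `0`
because `J ∈ Ŵ`, so `J(x₀) ≤ J_π(x₀)`, whence `J ≤ Ĵ`; the reverse inequality is part of `J ∈ Ŵ`. -/

namespace PMF

variable {α β : Type*}

theorem tsum_pure_apply_mul (a : α) (J : α → ℝ≥0∞) : ∑' y, pure a y * J y = J a := by
  simp only [pure_apply, ite_mul, one_mul, zero_mul, tsum_ite_eq]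

theorem tsum_bind_apply_mul (p : PMF α) (φ : α → PMF β) (J : β → ℝ≥0∞) :
    ∑' y, p.bind φ y * J y = ∑' x, p x * ∑' y, φ x y * J y := by
  simp only [bind_apply, ← ENNReal.tsum_mul_right, ← ENNReal.tsum_mul_left, mul_assoc]
  exact ENNReal.tsum_comm

theorem tsum_map_apply_mul (p : PMF α) (g : α → β) (J : β → ℝ≥0∞) :
    ∑' y, p.map g y * J y = ∑' x, p x * J (g x) := by
  rw [← bind_pure_comp, tsum_bind_apply_mul]
  simp only [Function.comp_apply, tsum_pure_apply_mul]

end PMF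

namespace SSP

variable {X U W : Type*} [Countable W] (S : SSP X U W)

theorem expect_zero (π : ℕ → X → U) (x₀ : X) (J : X → ℝ≥0∞) :
    S.expect π x₀ 0 J = J x₀ :=
  PMF.tsum_pure_apply_mul x₀ J

theorem expect_succ (π : ℕ → X → U) (x₀ : X) (k : ℕ) (J : X → ℝ≥0∞) :
    S.expect π x₀ (k + 1) J
      = S.expect π x₀ k fun x => ∑' w, S.P x (π k x) w * J (S.f x (π k x) w) := by
  simp only [expect, stateDist, PMF.tsum_bind_apply_mul, PMF.tsum_map_apply_mul]

theorem Q_eq_add (J : X → ℝ≥0∞) (x : X) (u : U) :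
    S.Q J x u = ∑' w, S.P x u w * S.g x u w + ∑' w, S.P x u w * J (S.f x u w) := by
  simp only [Q, mul_add, ENNReal.tsum_add]

theorem expect_le_stageCost_add_expect_succ {J : X → ℝ≥0∞} (hJ : J ≤ S.bellman J)
    {π : ℕ → X → U} (hπ : S.IsPolicy π) (x₀ : X) (k : ℕ) :
    S.expect π x₀ k J ≤ S.stageCost π x₀ k + S.expect π x₀ (k + 1) J := by
  rw [expect_succ, stageCost, expect, expect, expect, ← ENNReal.tsum_add]
  refine ENNReal.tsum_le_tsum fun x => ?_
  rw [← mul_add, ← Q_eq_add]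
  gcongr
  exact (hJ x).trans (iInf₂_le _ (hπ k x))

theorem le_sum_stageCost_add_expect {J : X → ℝ≥0∞} (hJ : J ≤ S.bellman J)
    {π : ℕ → X → U} (hπ : S.IsPolicy π) (x₀ : X) (k : ℕ) :
    J x₀ ≤ ∑ m ∈ Finset.range k, S.stageCost π x₀ m + S.expect π x₀ k J := by
  induction k with
  | zero => simp [expect_zero]
  | succ k ih =>
    calc J x₀ ≤ ∑ m ∈ Finset.range k, S.stageCost π x₀ m + S.expect π x₀ k J := ih
      _ ≤ ∑ m ∈ Finset.range k, S.stageCost π x₀ m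
            + (S.stageCost π x₀ k + S.expect π x₀ (k + 1) J) := by
        gcongr; exact S.expect_le_stageCost_add_expect_succ hJ hπ x₀ k
      _ = _ := by rw [Finset.sum_range_succ, add_assoc]

theorem le_Jcost_of_le_bellman {J : X → ℝ≥0∞} (hJ : J ≤ S.bellman J)
    {π : ℕ → X → U} (hπ : S.IsPolicy π) {x₀ : X}
    (hlim : Tendsto (fun k => S.expect π x₀ k J) atTop (nhds 0)) :
    J x₀ ≤ S.Jcost π x₀ := by
  have hsum := (ENNReal.tendsto_nat_tsum (S.stageCost π x₀)).add hlim
  rw [add_zero] at hsum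
  exact ge_of_tendsto' hsum (S.le_sum_stageCost_add_expect hJ hπ x₀)

end SSP

/-- `Ĵ` is the unique solution of Bellman's equation within `Ŵ`. -/
theorem Jhat_unique_in_What {X U W : Type*} [Countable W] (S : SSP X U W) :
    ∀ J ∈ S.What, (∀ x, J x = S.bellman J x) → J = S.Jhat := by
  rintro J ⟨-, hJhat_le, hlim⟩ hBell
  have hJ_le : J ≤ S.bellman J := fun x => (hBell x).le
  refine le_antisymm (fun x₀ => le_iInf₂ fun π hπ => ?_) hJhat_le
  exact S.le_Jcost_of_le_bellman hJ_le hπ.1 (hlim π x₀ hπ)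
end
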